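/- arXiv:2502.01544 — 6 statements merged into one kernel-verified Lean document; each statement's English description precedes it below -/
import Mathlib

section
/- Let 𝓑 be a simple expansion set over X, let v be a vertex, and let b ∈ v with |ℰ(b)| = 2. Then (v − {b}) ∪ Bas(b) is again a vertex, it has the same support as v (so if supp(v) = X then it is a full-support vertex), and its cardinality is strictly greater than |v|. -/
structure SimpleExpansionSet (B : Type*) (X : Type*) where
  supp : B → Set X
  supp_nonempty : ∀ b, (supp b).Nonempty
  E : B → Set (Finset B)
  self_mem : ∀ b, ({b} : Finset B) ∈ E b
  proper_unique : ∀ b : B, ∀ u ∈ E b, ∀ w ∈ E b, u ≠ {b} → w ≠ {b} → u = w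
  proper_disjoint : ∀ b : B, ∀ v ∈ E b, v ≠ {b} →
    ∀ b₁ ∈ v, ∀ b₂ ∈ v, b₁ ≠ b₂ → Disjoint (supp b₁) (supp b₂)
  proper_supp : ∀ b : B, ∀ v ∈ E b, v ≠ {b} → (⋃ b' ∈ v, supp b') = supp b
  proper_card : ∀ b : B, ∀ v ∈ E b, v ≠ {b} → 2 ≤ v.card

namespace SimpleExpansionSet

variable {B X : Type*}

/-- A vertex: a finite subset of `𝓑` whose members have pairwise disjoint supports. -/
def IsVertex (S : SimpleExpansionSet B X) (v : Finset B) : Prop :=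
  ∀ b₁ ∈ v, ∀ b₂ ∈ v, b₁ ≠ b₂ → Disjoint (S.supp b₁) (S.supp b₂)

/-- The support of a vertex. -/
def vsupp (S : SimpleExpansionSet B X) (v : Finset B) : Set X :=
  ⋃ b ∈ v, S.supp b

/-- `|ℰ(b)| = 2`, i.e. `b` admits a proper expansion. -/
def HasExpansion (S : SimpleExpansionSet B X) (b : B) : Prop :=
  ∃ u ∈ S.E b, u ≠ {b}

/-- The contraction basin of `b`: the unique member of `ℰ(b) - {{b}}` (when it exists). -/
noncomputable def Bas (S : SimpleExpansionSet B X) (b : B) : Finset B :=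
  @dite _ (S.HasExpansion b) (Classical.propDecidable _) (fun h => h.choose) (fun _ => {b})

/-- The restriction `r_b(u) = {b' ∈ u : supp b' ⊆ supp b}`. -/
noncomputable def restrict (S : SimpleExpansionSet B X) (b : B) (u : Finset B) : Finset B :=
  @Finset.filter _ (fun b' => S.supp b' ⊆ S.supp b) (Classical.decPred _) u

/-- The partial order on `ℰ(b)`: `{b}` is below everything. -/
def Eleq (b : B) (u w : Finset B) : Prop := u = w ∨ u = {b}

/-- The cube `𝒞(v₁, v₂)`, as a set of vertices. -/
noncomputable def cube [DecidableEq B] (S : SimpleExpansionSet B X) (v₁ v₂ : Finset B) :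
    Set (Finset B) :=
  { u | ∃ w ⊆ v₂, u = (v₁ \ v₂) ∪ (v₂ \ w) ∪ w.biUnion S.Bas }

/-- One expansion step: replace `b ∈ u` by its contraction basin. -/
def Step [DecidableEq B] (S : SimpleExpansionSet B X) (u v : Finset B) : Prop :=
  ∃ b ∈ u, S.HasExpansion b ∧ v = u.erase b ∪ S.Bas b

/-- The ascending-path relation `⪯`. -/
def Prec [DecidableEq B] (S : SimpleExpansionSet B X) : Finset B → Finset B → Prop :=
  Relation.ReflTransGen (S.Step)

/-- `u` is joined to `v` by a cubical edge with basin `Bsn` (relative to `v`). -/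
def BasinOf [DecidableEq B] (S : SimpleExpansionSet B X) (v u Bsn : Finset B) : Prop :=
  (∃ b ∈ v, S.HasExpansion b ∧ u = v.erase b ∪ S.Bas b ∧ Bsn = {b}) ∨
  (∃ b ∈ u, S.HasExpansion b ∧ v = u.erase b ∪ S.Bas b ∧ Bsn = S.Bas b)

end SimpleExpansionSet

open SimpleExpansionSet

namespace SimpleExpansionSet

variable {B X : Type*} (S : SimpleExpansionSet B X)

theorem vsupp_union [DecidableEq B] (u w : Finset B) :
    S.vsupp (u ∪ w) = S.vsupp u ∪ S.vsupp w :=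
  Finset.set_biUnion_union u w S.supp

theorem vsupp_insert [DecidableEq B] (b : B) (u : Finset B) :
    S.vsupp (insert b u) = S.supp b ∪ S.vsupp u :=
  Finset.set_biUnion_insert b u S.supp

theorem supp_subset_vsupp {b : B} {u : Finset B} (hb : b ∈ u) : S.supp b ⊆ S.vsupp u :=
  Set.subset_biUnion_of_mem (u := S.supp) (Finset.mem_coe.2 hb)

theorem vsupp_erase_union [DecidableEq B] {v u : Finset B} {b : B} (hb : b ∈ v)
    (hu : S.vsupp u = S.supp b) : S.vsupp (v.erase b ∪ u) = S.vsupp v := by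
  conv_rhs => rw [← Finset.insert_erase hb]
  rw [vsupp_union, vsupp_insert, hu, Set.union_comm]

theorem isVertex_erase_union [DecidableEq B] {v u : Finset B} {b : B} (hv : S.IsVertex v)
    (hb : b ∈ v) (hu : S.IsVertex u) (hsub : ∀ b' ∈ u, S.supp b' ⊆ S.supp b) :
    S.IsVertex (v.erase b ∪ u) := by
  have hout : ∀ b₁ ∈ v.erase b, ∀ b₂ ∈ u, Disjoint (S.supp b₁) (S.supp b₂) :=
    fun b₁ h₁ b₂ h₂ =>
      (hv b₁ (Finset.mem_of_mem_erase h₁) b hb (Finset.ne_of_mem_erase h₁)).mono_right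
        (hsub b₂ h₂)
  intro b₁ h₁ b₂ h₂ hne
  rcases Finset.mem_union.1 h₁ with h₁ | h₁ <;> rcases Finset.mem_union.1 h₂ with h₂ | h₂
  · exact hv b₁ (Finset.mem_of_mem_erase h₁) b₂ (Finset.mem_of_mem_erase h₂) hne
  · exact hout b₁ h₁ b₂ h₂
  · exact (hout b₂ h₂ b₁ h₁).symm
  · exact hu b₁ h₁ b₂ h₂ hne

/-- Supports are nonempty, so a member of `u` meets `supp b` and cannot be another member of `v`. -/
theorem disjoint_erase_of_supp_subset [DecidableEq B] {v u : Finset B} {b : B}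
    (hv : S.IsVertex v) (hb : b ∈ v) (hsub : ∀ b' ∈ u, S.supp b' ⊆ S.supp b) :
    Disjoint (v.erase b) u := by
  refine Finset.disjoint_right.2 fun b' hb' hmem => ?_
  obtain ⟨x, hx⟩ := S.supp_nonempty b'
  exact (hv b' (Finset.mem_of_mem_erase hmem) b hb (Finset.ne_of_mem_erase hmem)).le_bot
    ⟨hx, hsub b' hb' hx⟩

theorem card_lt_card_erase_union [DecidableEq B] {v u : Finset B} {b : B}
    (hv : S.IsVertex v) (hb : b ∈ v) (hsub : ∀ b' ∈ u, S.supp b' ⊆ S.supp b)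
    (hu : 2 ≤ u.card) : v.card < (v.erase b ∪ u).card := by
  rw [Finset.card_union_of_disjoint (S.disjoint_erase_of_supp_subset hv hb hsub),
    Finset.card_erase_of_mem hb]
  have : 0 < v.card := Finset.card_pos.2 ⟨b, hb⟩
  omega

section Basin

variable {S} {b : B}

theorem Bas_mem_E (hexp : S.HasExpansion b) : S.Bas b ∈ S.E b := by
  rw [Bas, dif_pos hexp]
  exact hexp.choose_spec.1

theorem Bas_ne_singleton (hexp : S.HasExpansion b) : S.Bas b ≠ {b} := by
  rw [Bas, dif_pos hexp]
  exact hexp.choose_spec.2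

theorem isVertex_Bas (hexp : S.HasExpansion b) : S.IsVertex (S.Bas b) :=
  S.proper_disjoint b _ (Bas_mem_E hexp) (Bas_ne_singleton hexp)

theorem vsupp_Bas (hexp : S.HasExpansion b) : S.vsupp (S.Bas b) = S.supp b :=
  S.proper_supp b _ (Bas_mem_E hexp) (Bas_ne_singleton hexp)

theorem two_le_card_Bas (hexp : S.HasExpansion b) : 2 ≤ (S.Bas b).card :=
  S.proper_card b _ (Bas_mem_E hexp) (Bas_ne_singleton hexp)

theorem supp_subset_of_mem_Bas (hexp : S.HasExpansion b) {b' : B} (hb' : b' ∈ S.Bas b) :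
    S.supp b' ⊆ S.supp b :=
  vsupp_Bas hexp ▸ S.supp_subset_vsupp hb'

end Basin

end SimpleExpansionSet

/-- expanding a vertex at `b` yields a vertex with the same support and
strictly larger cardinality. -/
theorem expansion_isVertex {B X : Type*} [DecidableEq B] (S : SimpleExpansionSet B X)
    (v : Finset B) (hv : S.IsVertex v) (b : B) (hb : b ∈ v) (hexp : S.HasExpansion b) :
    S.IsVertex (v.erase b ∪ S.Bas b) ∧
    S.vsupp (v.erase b ∪ S.Bas b) = S.vsupp v ∧
    (S.vsupp v = Set.univ → S.vsupp (v.erase b ∪ S.Bas b) = Set.univ) ∧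
    v.card < (v.erase b ∪ S.Bas b).card := by
  have hsub : ∀ b' ∈ S.Bas b, S.supp b' ⊆ S.supp b := fun _ => supp_subset_of_mem_Bas hexp
  have hsupp := S.vsupp_erase_union hb (vsupp_Bas hexp)
  exact ⟨S.isVertex_erase_union hv hb (isVertex_Bas hexp) hsub, hsupp, hsupp.trans,
    S.card_lt_card_erase_union hv hb hsub (two_le_card_Bas hexp)⟩
end

section
/- Let 𝓑 be a simple expansion set over X and let v = {b₁,…,b_k} be a full-support vertex. Then the map sending a family (B_b)_{b ∈ v} ∈ ∏_{b ∈ v} ℰ(b) to the set ⋃_{b ∈ v} B_b is a bijection from ∏_{b ∈ v} ℰ(b) onto the set of vertices of the ascending star of v (namely v itself together with all full-support vertices u such that r_b(u) ∈ ℰ(b) for every b ∈ v), and this bijection is an order isomorphism, where the ascending star is ordered by u ≤ w iff r_b(u) ≤ r_b(w) in ℰ(b) for all b ∈ v, and the product carries the product order. -/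
open SimpleExpansionSet

/-!
Restriction to `b ∈ v` undoes gluing: since the supports of the members of `v` are pairwise
disjoint and every member of `B_b ∈ ℰ(b)` has nonempty support inside `supp b`, restricting
`⋃_{c ∈ v} B_c` to `b` recovers exactly `B_b`. Conversely, because `v` has full support, every
member of a full-support vertex `u` lies inside some `supp b` with `b ∈ v`, so `u` is the union
of its restrictions. Hence gluing and restricting are inverse bijections, and the order on both
sides is read off coordinatewise through the restrictions.
-/

namespace SimpleExpansionSet

variable {B X : Type*} (S : SimpleExpansionSet B X)

theorem supp_subset_of_mem_E {b : B} {u : Finset B} (hu : u ∈ S.E b) {b' : B} (hb' : b' ∈ u) :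
    S.supp b' ⊆ S.supp b := by
  by_cases h : u = {b}
  · subst h
    rw [Finset.mem_singleton.mp hb']
  · rw [← S.proper_supp b u hu h]
    exact Set.subset_biUnion_of_mem hb'

theorem vsupp_eq_supp_of_mem_E {b : B} {u : Finset B} (hu : u ∈ S.E b) :
    S.vsupp u = S.supp b := by
  by_cases h : u = {b}
  · simp [h, vsupp]
  · exact S.proper_supp b u hu h

theorem isVertex_of_mem_E {b : B} {u : Finset B} (hu : u ∈ S.E b) : S.IsVertex u := by
  by_cases h : u = {b}
  · subst h
    intro b₁ h₁ b₂ h₂ hne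
    exact absurd ((Finset.mem_singleton.mp h₁).trans (Finset.mem_singleton.mp h₂).symm) hne
  · exact S.proper_disjoint b u hu h

theorem mem_restrict {b b' : B} {u : Finset B} :
    b' ∈ S.restrict b u ↔ b' ∈ u ∧ S.supp b' ⊆ S.supp b :=
  @Finset.mem_filter _ _ (Classical.decPred _) u b'

section Glue

variable [DecidableEq B] {v : Finset B} {p : {x // x ∈ v} → Finset B}

theorem mem_attach_biUnion {b' : B} : b' ∈ v.attach.biUnion p ↔ ∃ c, b' ∈ p c := by
  simp [Finset.mem_biUnion]

theorem restrict_attach_biUnion (hv : S.IsVertex v) (hp : ∀ c, p c ∈ S.E c.1) {b : B}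
    (hb : b ∈ v) : S.restrict b (v.attach.biUnion p) = p ⟨b, hb⟩ := by
  ext b'
  rw [mem_restrict, mem_attach_biUnion]
  constructor
  · rintro ⟨⟨⟨c, hc⟩, hb'c⟩, hb'b⟩
    by_contra hb'
    have hcb : c ≠ b := by rintro rfl; exact hb' hb'c
    obtain ⟨x, hx⟩ := S.supp_nonempty b'
    exact Set.disjoint_left.mp (hv c hc b hb hcb) (S.supp_subset_of_mem_E (hp _) hb'c hx)
      (hb'b hx)
  · intro hb'
    exact ⟨⟨_, hb'⟩, S.supp_subset_of_mem_E (hp _) hb'⟩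

theorem isVertex_attach_biUnion (hv : S.IsVertex v) (hp : ∀ c, p c ∈ S.E c.1) :
    S.IsVertex (v.attach.biUnion p) := by
  intro b₁ h₁ b₂ h₂ hne
  obtain ⟨c₁, hc₁⟩ := mem_attach_biUnion.mp h₁
  obtain ⟨c₂, hc₂⟩ := mem_attach_biUnion.mp h₂
  by_cases hc : c₁ = c₂
  · subst hc
    exact S.isVertex_of_mem_E (hp c₁) b₁ hc₁ b₂ hc₂ hne
  · exact (hv c₁.1 c₁.2 c₂.1 c₂.2 (Subtype.coe_injective.ne hc)).mono
      (S.supp_subset_of_mem_E (hp c₁) hc₁) (S.supp_subset_of_mem_E (hp c₂) hc₂)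

theorem vsupp_attach_biUnion (hp : ∀ c, p c ∈ S.E c.1) :
    S.vsupp (v.attach.biUnion p) = S.vsupp v := by
  ext x
  have hsupp (c : {x // x ∈ v}) : x ∈ S.vsupp (p c) ↔ x ∈ S.supp c :=
    by rw [S.vsupp_eq_supp_of_mem_E (hp c)]
  simp only [vsupp, Set.mem_iUnion] at hsupp ⊢
  constructor
  · rintro ⟨b', hb', hx⟩
    obtain ⟨c, hb'c⟩ := mem_attach_biUnion.mp hb'
    exact ⟨c, c.2, (hsupp c).mp ⟨b', hb'c, hx⟩⟩
  · rintro ⟨b, hb, hx⟩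
    obtain ⟨b', hb'c, hx'⟩ := (hsupp ⟨b, hb⟩).mpr hx
    exact ⟨b', mem_attach_biUnion.mpr ⟨_, hb'c⟩, hx'⟩

theorem attach_biUnion_restrict {u : Finset B} (hu : S.IsVertex u)
    (huv : S.vsupp u ⊆ S.vsupp v) (hr : ∀ b ∈ v, S.restrict b u ∈ S.E b) :
    (v.attach.biUnion fun b => S.restrict b.1 u) = u := by
  ext b'
  rw [mem_attach_biUnion]
  constructor
  · rintro ⟨c, hc⟩
    exact (S.mem_restrict.mp hc).1
  · intro hb'
    obtain ⟨x, hx⟩ := S.supp_nonempty b'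
    have hxv : x ∈ S.vsupp v := huv (Set.mem_biUnion hb' hx)
    simp only [vsupp, Set.mem_iUnion] at hxv
    obtain ⟨b, hb, hxb⟩ := hxv
    rw [← S.vsupp_eq_supp_of_mem_E (hr b hb), vsupp] at hxb
    simp only [Set.mem_iUnion] at hxb
    obtain ⟨b'', hb'', hx''⟩ := hxb
    obtain rfl : b'' = b' := by
      by_contra hne
      exact Set.disjoint_left.mp (hu b'' (S.mem_restrict.mp hb'').1 b' hb' hne) hx'' hx
    exact ⟨⟨b, hb⟩, hb''⟩

end Glue

end SimpleExpansionSet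

/-- the ascending star of a full-support vertex `v` is order-isomorphic to
`∏_{b ∈ v} ℰ(b)` via the map sending a family `(B_b)_{b ∈ v}` to `⋃_{b ∈ v} B_b`. -/
theorem ascendingStar_orderIso {B X : Type*} [DecidableEq B] (S : SimpleExpansionSet B X)
    (v : Finset B) (hv : S.IsVertex v) (hfull : S.vsupp v = Set.univ) :
    ∃ F : {p : {x // x ∈ v} → Finset B // ∀ b, p b ∈ S.E b.1} → Finset B,
      (∀ p, F p = v.attach.biUnion fun b => p.1 b) ∧
      (∀ p, F p ∈ insert v
        {u | S.IsVertex u ∧ S.vsupp u = Set.univ ∧ ∀ b ∈ v, S.restrict b u ∈ S.E b}) ∧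
      Function.Injective F ∧
      (∀ u ∈ insert v
          {u | S.IsVertex u ∧ S.vsupp u = Set.univ ∧ ∀ b ∈ v, S.restrict b u ∈ S.E b},
        ∃ p, F p = u) ∧
      (∀ p q, (∀ b, Eleq b.1 (p.1 b) (q.1 b)) ↔
        ∀ b ∈ v, Eleq b (S.restrict b (F p)) (S.restrict b (F q))) := by
  have restrict_glue (p : {p : {x // x ∈ v} → Finset B // ∀ b, p b ∈ S.E b.1}) {b} (hb : b ∈ v) :=
    S.restrict_attach_biUnion hv p.2 hb
  refine ⟨fun p => v.attach.biUnion p.1, fun _ => rfl, fun p => ?_, fun p q hpq => ?_,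
    fun u hu => ?_, fun p q => ⟨fun h b hb => ?_, fun h b => ?_⟩⟩
  · refine Or.inr ⟨S.isVertex_attach_biUnion hv p.2, ?_, fun b hb => ?_⟩
    · rw [S.vsupp_attach_biUnion p.2, hfull]
    · rw [restrict_glue p hb]
      exact p.2 ⟨b, hb⟩
  · ext1
    funext c
    rw [← restrict_glue p c.2, ← restrict_glue q c.2]
    exact congrArg _ hpq
  · rcases hu with rfl | ⟨hu, -, hr⟩
    · exact ⟨⟨fun b => {b.1}, fun b => S.self_mem b.1⟩, by ext; simp [Finset.mem_biUnion]⟩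
    · exact ⟨⟨fun b => S.restrict b.1 u, fun b => hr b.1 b.2⟩,
        S.attach_biUnion_restrict hu (hfull ▸ Set.subset_univ _) hr⟩
  · rw [restrict_glue p hb, restrict_glue q hb]
    exact h ⟨b, hb⟩
  · simpa only [restrict_glue p b.2, restrict_glue q b.2] using h b.1 b.2
end

section
/- (Intersection lemma) Let 𝓑 be a simple expansion set over X and let 𝒞 = 𝒞(v₁,v₂) and 𝒞' = 𝒞(v₁',v₂') be cubes. If b ∈ v₁ and b ∈ Bas(b') for some b' ∈ v₂', then b ∈ w for every vertex w ∈ 𝒞 ∩ 𝒞'. -/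
open SimpleExpansionSet

namespace SimpleExpansionSet

variable {B X : Type*} (S : SimpleExpansionSet B X)

theorem bas_spec {b : B} (h : S.HasExpansion b) :
    S.Bas b ∈ S.E b ∧ S.Bas b ≠ {b} := by
  rw [Bas, dif_pos h]
  exact h.choose_spec

theorem bas_eq_of_not_hasExpansion {b : B} (h : ¬S.HasExpansion b) : S.Bas b = {b} := by
  rw [Bas, dif_neg h]

theorem isVertex_singleton (b : B) : S.IsVertex {b} := by
  intro b₁ h₁ b₂ h₂ hne
  rw [Finset.mem_singleton] at h₁ h₂
  exact absurd (h₁.trans h₂.symm) hne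

theorem supp_subset_of_mem_bas {b c : B} (hc : c ∈ S.Bas b) : S.supp c ⊆ S.supp b := by
  by_cases h : S.HasExpansion b
  · rw [← S.proper_supp b _ (S.bas_spec h).1 (S.bas_spec h).2]
    exact Set.subset_biUnion_of_mem (u := S.supp) hc
  · rw [S.bas_eq_of_not_hasExpansion h, Finset.mem_singleton] at hc
    rw [hc]

theorem isVertex_bas (b : B) : S.IsVertex (S.Bas b) := by
  by_cases h : S.HasExpansion b
  · exact S.proper_disjoint b _ (S.bas_spec h).1 (S.bas_spec h).2
  · rw [S.bas_eq_of_not_hasExpansion h]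
    exact S.isVertex_singleton b

theorem bas_nonempty (b : B) : (S.Bas b).Nonempty := by
  by_cases h : S.HasExpansion b
  · exact Finset.card_pos.mp
      (zero_lt_two.trans_le (S.proper_card b _ (S.bas_spec h).1 (S.bas_spec h).2))
  · rw [S.bas_eq_of_not_hasExpansion h]
    exact Finset.singleton_nonempty b

/-- A proper expansion has at least two blocks with disjoint nonempty supports, so no block
carries the whole support. -/
theorem supp_ssubset_of_mem_bas {b c : B} (h : S.HasExpansion b) (hc : c ∈ S.Bas b) :
    S.supp c ⊂ S.supp b := by
  have hE := S.bas_spec h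
  obtain ⟨d, hd, hdc⟩ := Finset.exists_mem_ne (S.proper_card b _ hE.1 hE.2) c
  refine (S.supp_subset_of_mem_bas hc).ssubset_of_ne fun heq => ?_
  obtain ⟨x, hx⟩ := S.supp_nonempty d
  exact Set.disjoint_left.mp (S.proper_disjoint b _ hE.1 hE.2 d hd c hc hdc) hx
    (heq ▸ S.supp_subset_of_mem_bas hd hx)

variable {S}

theorem IsVertex.eq_of_supp_subset {v : Finset B} (hv : S.IsVertex v) {b₁ b₂ : B}
    (h₁ : b₁ ∈ v) (h₂ : b₂ ∈ v) (h : S.supp b₁ ⊆ S.supp b₂) : b₁ = b₂ := by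
  by_contra hne
  obtain ⟨x, hx⟩ := S.supp_nonempty b₁
  exact Set.disjoint_left.mp (hv b₁ h₁ b₂ h₂ hne) hx (h hx)

theorem IsVertex.biUnion [DecidableEq B] {v : Finset B} (hv : S.IsVertex v) {f : B → Finset B}
    (hf : ∀ d ∈ v, S.IsVertex (f d)) (hsupp : ∀ d ∈ v, ∀ c ∈ f d, S.supp c ⊆ S.supp d) :
    S.IsVertex (v.biUnion f) := by
  intro c₁ h₁ c₂ h₂ hne
  obtain ⟨d₁, hd₁, hc₁⟩ := Finset.mem_biUnion.mp h₁
  obtain ⟨d₂, hd₂, hc₂⟩ := Finset.mem_biUnion.mp h₂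
  by_cases hd : d₁ = d₂
  · subst hd
    exact hf d₁ hd₁ c₁ hc₁ c₂ hc₂ hne
  · exact (hv d₁ hd₁ d₂ hd₂ hd).mono (hsupp d₁ hd₁ c₁ hc₁) (hsupp d₂ hd₂ c₂ hc₂)

variable [DecidableEq B] (S)

noncomputable def cubeVertex (v₁ v₂ t : Finset B) : Finset B :=
  (v₁ \ v₂) ∪ (v₂ \ t) ∪ t.biUnion S.Bas

theorem mem_cube_iff {v₁ v₂ u : Finset B} :
    u ∈ S.cube v₁ v₂ ↔ ∃ t ⊆ v₂, u = S.cubeVertex v₁ v₂ t :=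
  Iff.rfl

variable {S} {v₁ v₂ t : Finset B}

theorem mem_cubeVertex_of_notMem {b : B} (hb : b ∈ v₁) (hbt : b ∉ t) :
    b ∈ S.cubeVertex v₁ v₂ t := by
  by_cases hb₂ : b ∈ v₂ <;> simp [cubeVertex, hb, hb₂, hbt]

theorem bas_subset_cubeVertex {b : B} (hbt : b ∈ t) : S.Bas b ⊆ S.cubeVertex v₁ v₂ t :=
  Finset.subset_union_right.trans' (Finset.subset_biUnion_of_mem S.Bas hbt)

theorem cubeVertex_eq_biUnion (hsub : v₂ ⊆ v₁) (ht : t ⊆ v₂) :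
    S.cubeVertex v₁ v₂ t = v₁.biUnion fun d => if d ∈ t then S.Bas d else {d} := by
  ext c
  simp only [cubeVertex, Finset.mem_union, Finset.mem_sdiff, Finset.mem_biUnion]
  constructor
  · rintro ((⟨hc₁, hc₂⟩ | ⟨hc₂, hct⟩) | ⟨d, hdt, hcd⟩)
    · exact ⟨c, hc₁, by simp [show c ∉ t from fun h => hc₂ (ht h)]⟩
    · exact ⟨c, hsub hc₂, by simp [hct]⟩
    · exact ⟨d, hsub (ht hdt), by simpa [hdt] using hcd⟩
  · rintro ⟨d, hd₁, hcd⟩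
    split_ifs at hcd with hdt
    · exact Or.inr ⟨d, hdt, hcd⟩
    · rw [Finset.mem_singleton] at hcd
      subst hcd
      by_cases hc₂ : c ∈ v₂ <;> simp [hd₁, hc₂, hdt]

theorem isVertex_cubeVertex (hv₁ : S.IsVertex v₁) (hsub : v₂ ⊆ v₁) (ht : t ⊆ v₂) :
    S.IsVertex (S.cubeVertex v₁ v₂ t) := by
  rw [cubeVertex_eq_biUnion hsub ht]
  refine hv₁.biUnion (fun d _ => ?_) (fun d _ c hc => ?_) <;> split_ifs at * with hdt
  · exact S.isVertex_bas d
  · exact S.isVertex_singleton d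
  · exact S.supp_subset_of_mem_bas hc
  · rw [Finset.mem_singleton.mp hc]

end SimpleExpansionSet

theorem intersection_lemma_general {B X : Type*} [DecidableEq B] (S : SimpleExpansionSet B X)
    (v₁ v₂ v₁' v₂' : Finset B)
    (hv₁' : S.IsVertex v₁')
    (hsub' : v₂' ⊆ v₁')
    (hexp : ∀ b ∈ v₂, S.HasExpansion b) (hexp' : ∀ b ∈ v₂', S.HasExpansion b)
    (b : B) (hb : b ∈ v₁) (b' : B) (hb' : b' ∈ v₂') (hbas : b ∈ S.Bas b') :
    ∀ w ∈ S.cube v₁ v₂ ∩ S.cube v₁' v₂', b ∈ w := by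
  rintro w ⟨hw, hw'⟩
  obtain ⟨t, ht, rfl⟩ := S.mem_cube_iff.mp hw
  obtain ⟨t', ht', hw⟩ := S.mem_cube_iff.mp hw'
  by_cases hbt' : b' ∈ t'
  · exact hw ▸ bas_subset_cubeVertex hbt' hbas
  by_contra hbw
  have hbt : b ∈ t := by_contra fun hbt => hbw (mem_cubeVertex_of_notMem hb hbt)
  obtain ⟨c, hc⟩ := S.bas_nonempty b
  -- `supp c ⊂ supp b ⊂ supp b'`, yet `c` and `b'` are both blocks of one vertex.
  have hlt : S.supp c ⊂ S.supp b' :=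
    (S.supp_ssubset_of_mem_bas (hexp b (ht hbt)) hc).trans
      (S.supp_ssubset_of_mem_bas (hexp' b' hb') hbas)
  have hvert := hw ▸ isVertex_cubeVertex hv₁' hsub' ht'
  have hb'w := hw ▸ mem_cubeVertex_of_notMem (hsub' hb') hbt'
  exact hlt.ne (congrArg S.supp (hvert.eq_of_supp_subset (bas_subset_cubeVertex hbt hc) hb'w
    hlt.subset))

/-- Intersection lemma: if `b ∈ v₁` and `b ∈ Bas(b')` for some `b' ∈ v₂'`,
then `b ∈ w` for every vertex `w ∈ 𝒞(v₁,v₂) ∩ 𝒞(v₁',v₂')`. -/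
theorem intersection_lemma {B X : Type*} [DecidableEq B] (S : SimpleExpansionSet B X)
    (v₁ v₂ v₁' v₂' : Finset B)
    (hv₁ : S.IsVertex v₁) (hv₁' : S.IsVertex v₁')
    (hsub : v₂ ⊆ v₁) (hsub' : v₂' ⊆ v₁')
    (hexp : ∀ b ∈ v₂, S.HasExpansion b) (hexp' : ∀ b ∈ v₂', S.HasExpansion b)
    (b : B) (hb : b ∈ v₁) (b' : B) (hb' : b' ∈ v₂') (hbas : b ∈ S.Bas b') :
    ∀ w ∈ S.cube v₁ v₂ ∩ S.cube v₁' v₂', b ∈ w :=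
  intersection_lemma_general S v₁ v₂ v₁' v₂' hv₁' hsub' hexp hexp' b hb b' hb' hbas
end

section
/- (Relative ascending links in the simple case) Let 𝓑 be a simple expansion set over X, let b ∈ 𝓑, and let v be a vertex. Then the set {u ∈ ℰ(b) : u ≠ {b} and u ⪯ v} equals {Bas(b)} if {b} ⪯ v and {b} ≠ v, and it is empty otherwise (i.e., if {b} = v or {b} ⋠ v). -/
open SimpleExpansionSet

namespace SimpleExpansionSet

variable {B X : Type*} (S : SimpleExpansionSet B X)

theorem bas_mem_E {b : B} (h : S.HasExpansion b) : S.Bas b ∈ S.E b := by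
  rw [Bas, dif_pos h]
  exact h.choose_spec.1

theorem bas_ne_singleton {b : B} (h : S.HasExpansion b) : S.Bas b ≠ {b} := by
  rw [Bas, dif_pos h]
  exact h.choose_spec.2

theorem eq_bas_of_mem_E {b : B} {u : Finset B} (hu : u ∈ S.E b) (hne : u ≠ {b}) :
    u = S.Bas b :=
  have h : S.HasExpansion b := ⟨u, hu, hne⟩
  S.proper_unique b u hu _ (S.bas_mem_E h) hne (S.bas_ne_singleton h)

variable [DecidableEq B] {S}

theorem Step.two_le_card {u w : Finset B} (h : S.Step u w) : 2 ≤ w.card := by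
  obtain ⟨b, -, hb, rfl⟩ := h
  calc 2 ≤ (S.Bas b).card := S.proper_card b _ (S.bas_mem_E hb) (S.bas_ne_singleton hb)
    _ ≤ _ := Finset.card_le_card Finset.subset_union_right

theorem step_singleton_iff {b : B} {w : Finset B} :
    S.Step {b} w ↔ S.HasExpansion b ∧ w = S.Bas b := by
  simp [Step]

theorem Prec.eq_of_singleton {u : Finset B} {b : B} (h : S.Prec u {b}) : u = {b} := by
  rcases h.cases_tail with h | ⟨w, -, hs⟩
  · exact h.symm
  · simpa using hs.two_le_card

theorem mem_E_ne_prec_iff {b : B} {u v : Finset B} :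
    (u ∈ S.E b ∧ u ≠ {b} ∧ S.Prec u v) ↔ u = S.Bas b ∧ S.Prec {b} v ∧ {b} ≠ v := by
  constructor
  · rintro ⟨hu, hne, huv⟩
    obtain rfl := S.eq_bas_of_mem_E hu hne
    refine ⟨rfl, .head (step_singleton_iff.2 ⟨⟨_, hu, hne⟩, rfl⟩) huv, ?_⟩
    rintro rfl
    exact hne huv.eq_of_singleton
  · rintro ⟨rfl, hbv, hne⟩
    rcases hbv.cases_head with h | ⟨w, hstep, hwv⟩
    · exact absurd h hne
    obtain ⟨hb, rfl⟩ := step_singleton_iff.1 hstep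
    exact ⟨S.bas_mem_E hb, S.bas_ne_singleton hb, hwv⟩

end SimpleExpansionSet

theorem relative_ascending_link_general {B X : Type*} [DecidableEq B] (S : SimpleExpansionSet B X)
    (b : B) (v : Finset B) :
    (S.Prec {b} v → ({b} : Finset B) ≠ v →
      {u : Finset B | u ∈ S.E b ∧ u ≠ {b} ∧ S.Prec u v} = {S.Bas b}) ∧
    ((({b} : Finset B) = v ∨ ¬ S.Prec {b} v) →
      {u : Finset B | u ∈ S.E b ∧ u ≠ {b} ∧ S.Prec u v} = ∅) := by
  simp only [mem_E_ne_prec_iff]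
  constructor
  · intro hbv hne
    ext u
    simp [hbv, hne]
  · rintro (rfl | hbv) <;> ext u <;> simp [*]

/-- Relative ascending links in the simple case. -/
theorem relative_ascending_link {B X : Type*} [DecidableEq B] (S : SimpleExpansionSet B X)
    (b : B) (v : Finset B) (hv : S.IsVertex v) :
    (S.Prec {b} v → ({b} : Finset B) ≠ v →
      {u : Finset B | u ∈ S.E b ∧ u ≠ {b} ∧ S.Prec u v} = {S.Bas b}) ∧
    ((({b} : Finset B) = v ∨ ¬ S.Prec {b} v) →
      {u : Finset B | u ∈ S.E b ∧ u ≠ {b} ∧ S.Prec u v} = ∅) :=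
  relative_ascending_link_general S b v
end

section
/- (Local finiteness) Let 𝓑 be a simple expansion set over X. Suppose that for each vertex w of 𝓑 there are only finitely many b ∈ 𝓑 with |ℰ(b)| = 2 and Bas(b) = w. Then Δ^f_𝓑 is locally finite: every full-support vertex v spans a 1-simplex with only finitely many full-support vertices. -/
open SimpleExpansionSet

/-!
A neighbour `u` of a full-support vertex `v` is either an expansion or a contraction of `v`.
In the first case every element of `u` lies in some restriction `r_b(u) ∈ ℰ(b)`, `b ∈ v`, so
`u ⊆ v ∪ ⋃_{b ∈ v} Bas(b)`. In the second case each `b ∈ u` has `r_b(v) ∈ ℰ(b)`, so either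
`b ∈ v` or `Bas(b)` is one of the finitely many subsets of `v`, and by hypothesis only finitely
many `b` have a given basin. Either way `u` is a subset of a finite set depending only on `v`.
-/

namespace SimpleExpansionSet

variable {B X : Type*} {S : SimpleExpansionSet B X} {b : B} {u v w : Finset B}

theorem IsVertex.mono (hv : S.IsVertex v) (hwv : w ⊆ v) : S.IsVertex w :=
  fun b₁ h₁ b₂ h₂ => hv b₁ (hwv h₁) b₂ (hwv h₂)

theorem restrict_subset : S.restrict b u ⊆ u := by
  classical
  exact Finset.filter_subset _ u

theorem Bas_eq_of_mem_E (hw : w ∈ S.E b) (hne : w ≠ {b}) : S.Bas b = w := by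
  have h : S.HasExpansion b := ⟨w, hw, hne⟩
  rw [Bas, dif_pos h]
  exact S.proper_unique b _ h.choose_spec.1 _ hw h.choose_spec.2 hne

theorem eq_singleton_or_Bas_eq_of_mem_E (hw : w ∈ S.E b) :
    w = {b} ∨ (S.HasExpansion b ∧ S.Bas b = w) := by
  by_cases hne : w = {b}
  · exact Or.inl hne
  · exact Or.inr ⟨⟨w, hw, hne⟩, Bas_eq_of_mem_E hw hne⟩

theorem vsupp_eq_supp_of_mem_E_s13 (hw : w ∈ S.E b) : S.vsupp w = S.supp b := by
  by_cases hne : w = {b}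
  · simp [hne, vsupp]
  · exact S.proper_supp b w hw hne

theorem exists_mem_restrict_of_forall_restrict_mem_E (hu : S.IsVertex u)
    (hv : S.vsupp v = Set.univ) (hE : ∀ b ∈ v, S.restrict b u ∈ S.E b) {c : B} (hc : c ∈ u) :
    ∃ b ∈ v, c ∈ S.restrict b u := by
  obtain ⟨x, hxc⟩ := S.supp_nonempty c
  obtain ⟨b, hbv, hxb⟩ := Set.mem_iUnion₂.mp (hv ▸ Set.mem_univ x : x ∈ S.vsupp v)
  rw [← vsupp_eq_supp_of_mem_E_s13 (hE b hbv)] at hxb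
  obtain ⟨c', hc', hxc'⟩ := Set.mem_iUnion₂.mp hxb
  obtain rfl : c' = c := by
    by_contra hne
    exact (hu c' (restrict_subset hc') c hc hne).ne_of_mem hxc' hxc rfl
  exact ⟨b, hbv, hc'⟩

theorem subset_union_biUnion_Bas_of_forall_restrict_mem_E [DecidableEq B] (hu : S.IsVertex u)
    (hv : S.vsupp v = Set.univ) (hE : ∀ b ∈ v, S.restrict b u ∈ S.E b) :
    u ⊆ v ∪ v.biUnion S.Bas := by
  intro c hc
  obtain ⟨b, hbv, hcb⟩ := exists_mem_restrict_of_forall_restrict_mem_E hu hv hE hc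
  rcases eq_singleton_or_Bas_eq_of_mem_E (hE b hbv) with h | ⟨-, h⟩
  · rw [h, Finset.mem_singleton] at hcb
    exact Finset.mem_union_left _ (hcb ▸ hbv)
  · exact Finset.mem_union_right _ (Finset.mem_biUnion.mpr ⟨b, hbv, h ▸ hcb⟩)

theorem coe_subset_union_setOf_Bas_subset_of_forall_restrict_mem_E
    (hE : ∀ b ∈ u, S.restrict b v ∈ S.E b) :
    (u : Set B) ⊆ v ∪ {b | S.HasExpansion b ∧ S.Bas b ⊆ v} := by
  intro b hb
  rcases eq_singleton_or_Bas_eq_of_mem_E (hE b hb) with h | ⟨hexp, h⟩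
  · have hbv : b ∈ S.restrict b v := h ▸ Finset.mem_singleton_self b
    exact Or.inl (restrict_subset hbv)
  · exact Or.inr ⟨hexp, h ▸ restrict_subset⟩

theorem finite_setOf_Bas_subset
    (hfin : ∀ w : Finset B, S.IsVertex w → {b : B | S.HasExpansion b ∧ S.Bas b = w}.Finite)
    (hv : S.IsVertex v) : {b | S.HasExpansion b ∧ S.Bas b ⊆ v}.Finite := by
  refine (v.powerset.finite_toSet.biUnion fun w hw =>
    hfin w (hv.mono (Finset.mem_powerset.mp hw))).subset ?_
  rintro b ⟨hexp, hbv⟩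
  exact Set.mem_iUnion₂.mpr ⟨S.Bas b, Finset.mem_powerset.mpr hbv, hexp, rfl⟩

end SimpleExpansionSet

/-- Local finiteness: if every vertex is the contraction basin of only
finitely many `b ∈ 𝓑`, then `Δ^f_𝓑` is locally finite. -/
theorem locally_finite {B X : Type*} [DecidableEq B] (S : SimpleExpansionSet B X)
    (hfin : ∀ w : Finset B, S.IsVertex w →
      {b : B | S.HasExpansion b ∧ S.Bas b = w}.Finite) :
    ∀ v : Finset B, S.IsVertex v → S.vsupp v = Set.univ →
      {u : Finset B | S.IsVertex u ∧ S.vsupp u = Set.univ ∧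
        ((v.card < u.card ∧ ∀ b ∈ v, S.restrict b u ∈ S.E b) ∨
         (u.card < v.card ∧ ∀ b ∈ u, S.restrict b v ∈ S.E b))}.Finite := by
  intro v hv hvs
  set T : Set B := ↑(v ∪ v.biUnion S.Bas) ∪ {b | S.HasExpansion b ∧ S.Bas b ⊆ v}
  have hT : T.Finite :=
    (v ∪ v.biUnion S.Bas).finite_toSet.union (finite_setOf_Bas_subset hfin hv)
  refine hT.toFinset.powerset.finite_toSet.subset ?_
  rintro u ⟨hu, -, ⟨-, hE⟩ | ⟨-, hE⟩⟩
  all_goals rw [Finset.mem_coe, Finset.mem_powerset, ← Finset.coe_subset, hT.coe_toFinset]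
  · exact (Finset.coe_subset.mpr
      (subset_union_biUnion_Bas_of_forall_restrict_mem_E hu hvs hE)).trans Set.subset_union_left
  · refine (coe_subset_union_setOf_Bas_subset_of_forall_restrict_mem_E hE).trans ?_
    exact Set.union_subset_union_left _ (Finset.coe_subset.mpr Finset.subset_union_left)
end

section
/- (Directedness for Thompson's group V) In the V expansion set 𝓑_V, the full-support vertices form a directed set with respect to ⪯: for any full-support vertices v₁ and v₂ there exists a full-support vertex v'' with v₁ ⪯ v'' and v₂ ⪯ v''. -/
/-- The Cantor set `X = ∏_{i=1}^∞ {0,1}`. -/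
abbrev Cantor := ℕ → Bool

/-- The cylinder (ball) `B_ω`: all infinite binary sequences with prefix `ω`. -/
def cyl (ω : List Bool) : Set Cantor := {x | ∀ i : Fin ω.length, x i.1 = ω.get i}

/-- The prefix replacement `σ_{α}^{β} : B_α → B_β` (as a total function). -/
def sigmaMap (α β : List Bool) : Cantor → Cantor :=
  fun x i => if h : i < β.length then β.get ⟨i, h⟩ else x (i - β.length + α.length)

/-- `f` is a disjoint union of finitely many members of `S_V` whose domains
partition `B_ω` (and whose codomains are pairwise disjoint, so `f` is injective). -/
def IsVMap (ω : List Bool) (f : Cantor → Cantor) : Prop :=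
  ∃ (n : ℕ) (d c : Fin n → List Bool),
    (⋃ i, cyl (d i)) = cyl ω ∧
    (∀ i j, i ≠ j → Disjoint (cyl (d i)) (cyl (d j))) ∧
    (∀ i j, i ≠ j → Disjoint (cyl (c i)) (cyl (c j))) ∧
    (∀ i, ∀ x ∈ cyl (d i), f x = sigmaMap (d i) (c i) x)

/-- A V-pair `(f, B_ω)`. -/
structure VPair where
  word : List Bool
  f : Cantor → Cantor
  isV : IsVMap word f

/-- `(f₁, B_{ω₁}) ∼ (f₂, B_{ω₂})`: there is `σ ∈ S_V` carrying `B_{ω₁}` bijectively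
onto `B_{ω₂}` with `f₂ ∘ σ = f₁`; such a `σ` is necessarily `σ_{ω₁}^{ω₂}`. -/
def VEquiv (p q : VPair) : Prop :=
  ∀ x ∈ cyl p.word, q.f (sigmaMap p.word q.word x) = p.f x

/-- The V expansion set `𝓑_V`: equivalence classes `[f, B_ω]` of V-pairs. -/
def BV := Quot VEquiv

noncomputable instance : DecidableEq BV := Classical.decEq BV

/-- `supp([f, B_ω]) = f(B_ω)` (computed from a chosen representative). -/
noncomputable def suppV (b : BV) : Set Cantor :=
  (Quot.out b).f '' cyl (Quot.out b).word

/-- `u = Bas(b)`: `u` is the contraction basin `{[f|_{B_{ω0}}, B_{ω0}], [f|_{B_{ω1}}, B_{ω1}]}`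
of `b = [f, B_ω]`. -/
def IsBasV (b : BV) (u : Finset BV) : Prop :=
  ∃ p pl pr : VPair, Quot.mk VEquiv p = b ∧
    pl.word = p.word ++ [false] ∧ pl.f = p.f ∧
    pr.word = p.word ++ [true] ∧ pr.f = p.f ∧
    u = {Quot.mk VEquiv pl, Quot.mk VEquiv pr}

/-- A vertex of `𝓑_V`. -/
def VIsVertex (v : Finset BV) : Prop :=
  ∀ b₁ ∈ v, ∀ b₂ ∈ v, b₁ ≠ b₂ → Disjoint (suppV b₁) (suppV b₂)

def vsuppV (v : Finset BV) : Set Cantor := ⋃ b ∈ v, suppV b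

/-- One expansion step: replace `b ∈ v` by its contraction basin. -/
def stepV (v v' : Finset BV) : Prop :=
  ∃ b ∈ v, ∃ u : Finset BV, IsBasV b u ∧ v' = v.erase b ∪ u

/-- The ascending-path relation `⪯` on vertices of `𝓑_V`. -/
def precV : Finset BV → Finset BV → Prop := Relation.ReflTransGen stepV

/-!
A V-map `f` on `B_ω` is a prefix replacement on each of finitely many cylinders `B_{d i}`, so once
`|ωs| ≥ max |d i|` it is a single prefix replacement on `B_{ωs}`, and `[f, B_{ωs}]` is the class
`[id, B_c]` of a cylinder. Expansion steps preserve supports and disjointness, so expanding every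
member of a full-support vertex deeply enough reaches a vertex of cylinder classes whose cylinders
partition `X`. For `N` at least the length of every cylinder word reached from `v₁` and from `v₂`,
expanding each `[id, B_c]` to depth `N - |c|` yields the same vertex `{[id, B_u] : |u| = N}` from
both.
-/

section Cylinders

lemma mem_cyl {x : Cantor} {ω : List Bool} :
    x ∈ cyl ω ↔ ∀ i (h : i < ω.length), x i = ω[i] :=
  ⟨fun hx i h => hx ⟨i, h⟩, fun hx i => hx i.1 i.2⟩

lemma cyl_nonempty (ω : List Bool) : (cyl ω).Nonempty :=
  ⟨fun i => ω.getD i false, mem_cyl.2 fun _ h => List.getD_eq_getElem ω false h⟩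

lemma cyl_append_subset (α β : List Bool) : cyl (α ++ β) ⊆ cyl α := fun x hx =>
  mem_cyl.2 fun i h => by
    rw [mem_cyl.1 hx i (by simp; omega), List.getElem_append_left h]

lemma cyl_subset_of_prefix {α β : List Bool} (h : α <+: β) : cyl β ⊆ cyl α := by
  obtain ⟨t, rfl⟩ := h
  exact cyl_append_subset α t

lemma mem_cyl_concat {x : Cantor} {ω : List Bool} {a : Bool} :
    x ∈ cyl (ω ++ [a]) ↔ x ∈ cyl ω ∧ x ω.length = a := by
  refine ⟨fun hx => ⟨cyl_append_subset ω [a] hx, by simpa using mem_cyl.1 hx ω.length⟩,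
    ?_⟩
  rintro ⟨hx, ha⟩
  refine mem_cyl.2 fun i h => ?_
  rcases lt_or_eq_of_le (Nat.le_of_lt_succ (by simpa using h)) with hi | rfl
  · rw [List.getElem_append_left hi]
    exact mem_cyl.1 hx i hi
  · simpa using ha

lemma cyl_eq_union (ω : List Bool) : cyl ω = cyl (ω ++ [false]) ∪ cyl (ω ++ [true]) := by
  ext x
  simp only [Set.mem_union, mem_cyl_concat]
  cases x ω.length <;> simp

lemma prefix_of_mem_cyl_of_length_le {x : Cantor} {α β : List Bool} (hα : x ∈ cyl α)
    (hβ : x ∈ cyl β) (h : α.length ≤ β.length) : α <+: β := by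
  rw [List.prefix_iff_eq_take]
  refine List.ext_getElem (by simp [h]) fun i h₁ _ => ?_
  rw [List.getElem_take, ← mem_cyl.1 hα i h₁, ← mem_cyl.1 hβ i (by omega)]

lemma prefix_or_prefix_of_mem_cyl {x : Cantor} {α β : List Bool} (hα : x ∈ cyl α)
    (hβ : x ∈ cyl β) : α <+: β ∨ β <+: α :=
  (le_total α.length β.length).imp (prefix_of_mem_cyl_of_length_le hα hβ)
    (prefix_of_mem_cyl_of_length_le hβ hα)

lemma disjoint_cyl_of_length_eq {α β : List Bool} (h : α.length = β.length) (hne : α ≠ β) :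
    Disjoint (cyl α) (cyl β) :=
  Set.disjoint_left.2 fun _ hα hβ =>
    hne ((prefix_of_mem_cyl_of_length_le hα hβ h.le).eq_of_length h)

end Cylinders

section PrefixReplacement

lemma sigmaMap_mem (α β : List Bool) (x : Cantor) : sigmaMap α β x ∈ cyl β :=
  mem_cyl.2 fun i h => by simp [sigmaMap, h]

lemma sigmaMap_sigmaMap (α β γ : List Bool) (x : Cantor) :
    sigmaMap β γ (sigmaMap α β x) = sigmaMap α γ x := by
  funext i
  simp only [sigmaMap]
  by_cases h : i < γ.length
  · simp [h]
  · simp only [dif_neg h, dif_neg (show ¬ i - γ.length + β.length < β.length by omega)]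
    congr 1
    omega

lemma sigmaMap_self_eqOn (α : List Bool) : Set.EqOn (sigmaMap α α) id (cyl α) := by
  intro x hx
  funext i
  simp only [sigmaMap, id]
  by_cases h : i < α.length
  · simp [h, mem_cyl.1 hx i h]
  · simp only [dif_neg h]
    congr 1
    omega

lemma sigmaMap_injOn (α β : List Bool) : Set.InjOn (sigmaMap α β) (cyl α) := by
  intro x hx y hy hxy
  have := congrArg (sigmaMap β α) hxy
  rwa [sigmaMap_sigmaMap, sigmaMap_sigmaMap, sigmaMap_self_eqOn α hx,
    sigmaMap_self_eqOn α hy] at this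

lemma sigmaMap_append_eqOn (α β s : List Bool) :
    Set.EqOn (sigmaMap (α ++ s) (β ++ s)) (sigmaMap α β) (cyl (α ++ s)) := by
  intro x hx
  funext i
  simp only [sigmaMap, List.length_append, List.get_eq_getElem]
  by_cases h : i < β.length
  · simp only [dif_pos (show i < β.length + s.length by omega), dif_pos h,
      List.getElem_append_left h]
  by_cases h₂ : i < β.length + s.length
  · simp only [dif_pos h₂, dif_neg h, List.getElem_append_right (Nat.le_of_not_lt h)]
    rw [mem_cyl.1 hx (i - β.length + α.length) (by simp; omega),
      List.getElem_append_right (by omega)]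
    congr 1
    omega
  · simp only [dif_neg h₂, dif_neg h]
    congr 1
    omega

lemma eqOn_sigmaMap_append {f : Cantor → Cantor} {d c : List Bool}
    (hf : Set.EqOn f (sigmaMap d c) (cyl d)) (t : List Bool) :
    Set.EqOn f (sigmaMap (d ++ t) (c ++ t)) (cyl (d ++ t)) :=
  (hf.mono (cyl_append_subset d t)).trans (sigmaMap_append_eqOn d c t).symm

end PrefixReplacement

section VMaps

lemma isVMap_of_fintype {ι : Type*} [Fintype ι] {ω : List Bool} {f : Cantor → Cantor}
    (d c : ι → List Bool) (hU : ⋃ i, cyl (d i) = cyl ω)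
    (hd : Pairwise fun i j => Disjoint (cyl (d i)) (cyl (d j)))
    (hc : Pairwise fun i j => Disjoint (cyl (c i)) (cyl (c j)))
    (hf : ∀ i, Set.EqOn f (sigmaMap (d i) (c i)) (cyl (d i))) : IsVMap ω f := by
  let e := (Fintype.equivFin ι).symm
  exact ⟨Fintype.card ι, d ∘ e, c ∘ e,
    (e.surjective.iUnion_comp fun i => cyl (d i)).trans hU,
    fun i j hij => hd (e.injective.ne hij), fun i j hij => hc (e.injective.ne hij),
    fun i => hf (e i)⟩

lemma isVMap_of_eqOn_sigmaMap {ω c : List Bool} {f : Cantor → Cantor}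
    (hf : Set.EqOn f (sigmaMap ω c) (cyl ω)) : IsVMap ω f :=
  isVMap_of_fintype (ι := Unit) (fun _ => ω) (fun _ => c) (Set.iUnion_const _)
    Subsingleton.pairwise Subsingleton.pairwise fun _ => hf

lemma IsVMap.append {ω : List Bool} {f : Cantor → Cantor} (h : IsVMap ω f) (s : List Bool) :
    IsVMap (ω ++ s) f := by
  classical
  obtain ⟨n, d, c, hU, hd, hc, hf⟩ := h
  by_cases hshort : ∃ i, d i <+: ω ++ s
  · obtain ⟨i, t, ht⟩ := hshort
    exact isVMap_of_eqOn_sigmaMap (ht ▸ eqOn_sigmaMap_append (hf i) t)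
  simp only [not_exists] at hshort
  refine isVMap_of_fintype (ι := {i // ω ++ s <+: d i}) (fun i => d i) (fun i => c i) ?_
    (fun i j hij => hd i j (Subtype.val_injective.ne hij))
    (fun i j hij => hc i j (Subtype.val_injective.ne hij))
    fun i => hf i
  refine (Set.iUnion_subset fun i => cyl_subset_of_prefix i.2).antisymm fun x hx => ?_
  obtain ⟨i, hxi⟩ := Set.mem_iUnion.1 (hU ▸ cyl_append_subset ω s hx)
  exact Set.mem_iUnion.2
    ⟨⟨i, (prefix_or_prefix_of_mem_cyl hx hxi).resolve_right (hshort i)⟩, hxi⟩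

lemma IsVMap.injOn {ω : List Bool} {f : Cantor → Cantor} (h : IsVMap ω f) :
    Set.InjOn f (cyl ω) := by
  obtain ⟨n, d, c, hU, -, hc, hf⟩ := h
  intro x hx y hy hxy
  obtain ⟨i, hxi⟩ := Set.mem_iUnion.1 (hU ▸ hx)
  obtain ⟨j, hyj⟩ := Set.mem_iUnion.1 (hU ▸ hy)
  rw [hf i x hxi, hf j y hyj] at hxy
  obtain rfl : i = j := by
    by_contra hij
    exact Set.disjoint_left.1 (hc i j hij) (sigmaMap_mem _ _ x) (hxy ▸ sigmaMap_mem _ _ y)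
  exact sigmaMap_injOn _ _ hxi hyj hxy

end VMaps

namespace VPair

protected lemma ext {p q : VPair} (hw : p.word = q.word) (hf : p.f = q.f) : p = q := by
  cases p
  cases q
  cases hw
  cases hf
  rfl

def restrict (p : VPair) (s : List Bool) : VPair := ⟨p.word ++ s, p.f, p.isV.append s⟩

lemma restrict_nil (p : VPair) : p.restrict [] = p :=
  VPair.ext (List.append_nil _) rfl

lemma restrict_restrict (p : VPair) (s t : List Bool) :
    (p.restrict s).restrict t = p.restrict (s ++ t) :=
  VPair.ext (List.append_assoc _ _ _) rfl

end VPair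

/- Typed `BV` rather than `Quot VEquiv`, so that finsets such as `{p.toBV, q.toBV}` live in
`Finset BV`, whose instances the `Finset` lemmas match. -/
abbrev VPair.toBV (p : VPair) : BV := Quot.mk VEquiv p

def idVPair (c : List Bool) : VPair :=
  ⟨c, id, isVMap_of_eqOn_sigmaMap (sigmaMap_self_eqOn c).symm⟩

namespace VEquiv

variable {p q r : VPair}

protected lemma refl (p : VPair) : VEquiv p p := fun _ hx => congrArg p.f (sigmaMap_self_eqOn _ hx)

protected lemma symm (h : VEquiv p q) : VEquiv q p := by
  intro y hy
  have := h (sigmaMap q.word p.word y) (sigmaMap_mem _ _ _)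
  rw [sigmaMap_sigmaMap, sigmaMap_self_eqOn _ hy] at this
  exact this.symm

protected lemma trans (h₁ : VEquiv p q) (h₂ : VEquiv q r) : VEquiv p r := by
  intro x hx
  rw [← h₁ x hx, ← h₂ _ (sigmaMap_mem _ _ x), sigmaMap_sigmaMap]

lemma equivalence : Equivalence VEquiv := ⟨VEquiv.refl, VEquiv.symm, VEquiv.trans⟩

lemma image_subset (h : VEquiv p q) : p.f '' cyl p.word ⊆ q.f '' cyl q.word := by
  rintro _ ⟨x, hx, rfl⟩
  exact ⟨_, sigmaMap_mem _ _ x, h x hx⟩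

lemma restrict (h : VEquiv p q) (s : List Bool) : VEquiv (p.restrict s) (q.restrict s) :=
  fun x hx => (congrArg q.f (sigmaMap_append_eqOn _ _ _ hx)).trans (h x (cyl_append_subset _ _ hx))

end VEquiv

lemma VPair.toBV_eq_toBV_iff {p q : VPair} : p.toBV = q.toBV ↔ VEquiv p q :=
  ⟨fun h => VEquiv.equivalence.eqvGen_iff.1 (Quot.eqvGen_exact h), Quot.sound⟩

lemma VPair.vEquiv_out_toBV (p : VPair) : VEquiv (Quot.out p.toBV) p :=
  VPair.toBV_eq_toBV_iff.1 (Quot.out_eq _)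

lemma suppV_toBV (p : VPair) : suppV p.toBV = p.f '' cyl p.word :=
  (VPair.vEquiv_out_toBV p).image_subset.antisymm (VPair.vEquiv_out_toBV p).symm.image_subset

lemma suppV_nonempty (b : BV) : (suppV b).Nonempty := (cyl_nonempty _).image _

def cylClass (c : List Bool) : BV := (idVPair c).toBV

lemma suppV_cylClass (c : List Bool) : suppV (cylClass c) = cyl c :=
  (suppV_toBV _).trans (Set.image_id _)

lemma VPair.toBV_eq_cylClass {p : VPair} {c : List Bool}
    (h : Set.EqOn p.f (sigmaMap p.word c) (cyl p.word)) : p.toBV = cylClass c :=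
  Quot.sound fun _ hx => (h hx).symm

section Expansion

noncomputable def basV (b : BV) : Finset BV :=
  {((Quot.out b).restrict [false]).toBV, ((Quot.out b).restrict [true]).toBV}

lemma basV_toBV (p : VPair) : basV p.toBV =
    {(p.restrict [false]).toBV, (p.restrict [true]).toBV} := by
  simp only [basV, VPair.toBV_eq_toBV_iff.2 ((VPair.vEquiv_out_toBV p).restrict _)]

lemma isBasV_iff {b : BV} {u : Finset BV} : IsBasV b u ↔ u = basV b := by
  constructor
  · rintro ⟨p, pl, pr, rfl, hlw, hlf, hrw, hrf, rfl⟩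
    rw [basV_toBV, VPair.ext (q := p.restrict [false]) hlw hlf,
      VPair.ext (q := p.restrict [true]) hrw hrf]
    rfl
  · rintro rfl
    exact ⟨Quot.out b, (Quot.out b).restrict [false], (Quot.out b).restrict [true], Quot.out_eq b,
      rfl, rfl, rfl, rfl, rfl⟩

lemma vIsVertex_iff {v : Finset BV} : VIsVertex v ↔ (v : Set BV).PairwiseDisjoint suppV :=
  Iff.rfl

lemma suppV_subset_vsuppV {b : BV} {v : Finset BV} (hb : b ∈ v) : suppV b ⊆ vsuppV v :=
  Set.subset_biUnion_of_mem (u := suppV) hb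

lemma vsuppV_singleton (b : BV) : vsuppV {b} = suppV b :=
  Finset.set_biUnion_singleton b suppV

lemma vsuppV_union (v w : Finset BV) : vsuppV (v ∪ w) = vsuppV v ∪ vsuppV w :=
  Finset.set_biUnion_union v w suppV

lemma vsuppV_basV (b : BV) : vsuppV (basV b) = suppV b := by
  obtain ⟨p, rfl⟩ : ∃ p : VPair, p.toBV = b := Quot.exists_rep b
  rw [basV_toBV, Finset.insert_eq, vsuppV_union, vsuppV_singleton, vsuppV_singleton, suppV_toBV,
    suppV_toBV, suppV_toBV]
  exact (Set.image_union p.f _ _).symm.trans (congrArg (p.f '' ·) (cyl_eq_union p.word).symm)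

lemma vIsVertex_basV (b : BV) : VIsVertex (basV b) := by
  obtain ⟨p, rfl⟩ : ∃ p : VPair, p.toBV = b := Quot.exists_rep b
  have hdisj : Disjoint (suppV (p.restrict [false]).toBV) (suppV (p.restrict [true]).toBV) := by
    rw [suppV_toBV, suppV_toBV]
    exact (disjoint_cyl_of_length_eq (by simp [VPair.restrict]) (by simp [VPair.restrict])).image
      p.isV.injOn (cyl_append_subset _ _) (cyl_append_subset _ _)
  rw [vIsVertex_iff, basV_toBV, Finset.coe_pair]
  exact Set.pairwise_pair.2 fun _ => ⟨hdisj, hdisj.symm⟩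

lemma stepV_iff {v w : Finset BV} : stepV v w ↔ ∃ b ∈ v, w = v.erase b ∪ basV b := by
  simp only [stepV, isBasV_iff, exists_eq_left]

lemma stepV_basV (b : BV) : stepV {b} (basV b) :=
  stepV_iff.2 ⟨b, Finset.mem_singleton_self b,
    by rw [Finset.erase_singleton, Finset.empty_union]⟩

namespace stepV

variable {u v w : Finset BV}

lemma vsuppV_eq (h : stepV v w) : vsuppV w = vsuppV v := by
  obtain ⟨b, hb, rfl⟩ := stepV_iff.1 h
  conv_rhs => rw [← Finset.insert_erase hb, Finset.insert_eq]
  rw [vsuppV_union, vsuppV_union, vsuppV_basV, vsuppV_singleton, Set.union_comm]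

lemma vIsVertex (h : stepV v w) (hv : VIsVertex v) : VIsVertex w := by
  obtain ⟨b, hb, rfl⟩ := stepV_iff.1 h
  rw [vIsVertex_iff, Finset.coe_union, Set.pairwiseDisjoint_union]
  refine ⟨(vIsVertex_iff.1 hv).subset (Finset.coe_subset.2 (Finset.erase_subset b v)),
    vIsVertex_basV b, fun e he e' he' _ => ?_⟩
  exact (hv e (Finset.mem_of_mem_erase he) b hb (Finset.ne_of_mem_erase he)).mono_right
    (vsuppV_basV b ▸ suppV_subset_vsuppV he')

lemma union_right (h : stepV v w) (hu : Disjoint (vsuppV v) (vsuppV u)) :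
    stepV (v ∪ u) (w ∪ u) := by
  obtain ⟨b, hb, rfl⟩ := stepV_iff.1 h
  have hbu : b ∉ u := fun hbu => (suppV_nonempty b).ne_empty
    (disjoint_self.1 (hu.mono (suppV_subset_vsuppV hb) (suppV_subset_vsuppV hbu)))
  refine stepV_iff.2 ⟨b, Finset.mem_union_left u hb, ?_⟩
  rw [Finset.erase_union_distrib, Finset.erase_eq_of_notMem hbu, Finset.union_right_comm]

end stepV

namespace precV

variable {u v w : Finset BV}

lemma vsuppV_eq (h : precV v w) : vsuppV w = vsuppV v := by
  induction h with
  | refl => rfl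
  | tail _ hs ih => exact hs.vsuppV_eq.trans ih

lemma vIsVertex (h : precV v w) (hv : VIsVertex v) : VIsVertex w := by
  induction h with
  | refl => exact hv
  | tail _ hs ih => exact hs.vIsVertex ih

lemma union_right (h : precV v w) (hu : Disjoint (vsuppV v) (vsuppV u)) :
    precV (v ∪ u) (w ∪ u) := by
  induction h with
  | refl => exact .refl
  | tail hvw hs ih => exact ih.tail (hs.union_right (precV.vsuppV_eq hvw ▸ hu))

lemma union_left (h : precV v w) (hu : Disjoint (vsuppV u) (vsuppV v)) :
    precV (u ∪ v) (u ∪ w) := by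
  rw [Finset.union_comm u, Finset.union_comm u]
  exact h.union_right hu.symm

end precV

lemma precV_biUnion {v : Finset BV} (hv : VIsVertex v) {w : BV → Finset BV}
    (hw : ∀ b ∈ v, precV {b} (w b)) : precV v (v.biUnion w) := by
  induction v using Finset.induction_on with
  | empty => exact .refl
  | insert b v hb ih =>
    have ih' := ih ((vIsVertex_iff.1 hv).subset (Finset.coe_subset.2 (Finset.subset_insert b v)))
      fun b' hb' => hw b' (Finset.mem_insert_of_mem hb')
    have hdisj : Disjoint (vsuppV {b}) (vsuppV v) := by
      rw [vsuppV_singleton, vsuppV, Set.disjoint_iUnion₂_right]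
      exact fun b' hb' => hv b (Finset.mem_insert_self b v) b' (Finset.mem_insert_of_mem hb')
        (by rintro rfl; exact hb hb')
    rw [Finset.biUnion_insert, Finset.insert_eq]
    exact (ih'.union_left hdisj).trans
      ((hw b (Finset.mem_insert_self b v)).union_right (ih'.vsuppV_eq ▸ hdisj))

noncomputable def expandV : BV → ℕ → Finset BV
  | b, 0 => {b}
  | b, k + 1 => (basV b).biUnion fun e => expandV e k

lemma precV_expandV (b : BV) (k : ℕ) : precV {b} (expandV b k) := by
  induction k generalizing b with
  | zero => exact .refl
  | succ k ih =>
    exact (Relation.ReflTransGen.single (stepV_basV b)).trans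
      (precV_biUnion (vIsVertex_basV b) fun e _ => ih e)

lemma mem_expandV_toBV {p : VPair} {k : ℕ} {e : BV} :
    e ∈ expandV p.toBV k ↔
      ∃ s : List Bool, s.length = k ∧ (p.restrict s).toBV = e := by
  induction k generalizing p with
  | zero => simp [expandV, VPair.restrict_nil, Finset.mem_singleton, eq_comm]
  | succ k ih =>
    simp only [expandV, basV_toBV, Finset.mem_biUnion, Finset.mem_insert, Finset.mem_singleton,
      exists_eq_or_imp, exists_eq_left, ih, VPair.restrict_restrict]
    constructor
    · rintro (⟨s, hs, rfl⟩ | ⟨s, hs, rfl⟩) <;> exact ⟨_, by simp [hs], rfl⟩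
    · rintro ⟨_ | ⟨a, s⟩, hs, rfl⟩
      · simp at hs
      · cases a
        · exact .inl ⟨s, by simpa using hs, rfl⟩
        · exact .inr ⟨s, by simpa using hs, rfl⟩

lemma mem_expandV_cylClass {c : List Bool} {k : ℕ} {e : BV} :
    e ∈ expandV (cylClass c) k ↔ ∃ s : List Bool, s.length = k ∧ cylClass (c ++ s) = e := by
  refine mem_expandV_toBV.trans (exists_congr fun s => and_congr_right fun _ => ?_)
  rw [VPair.toBV_eq_cylClass (p := (idVPair c).restrict s) (sigmaMap_self_eqOn _).symm]
  rfl

end Expansion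

lemma VPair.exists_toBV_restrict_mem_range_cylClass (p : VPair) :
    ∃ k, ∀ s : List Bool, s.length = k → (p.restrict s).toBV ∈ Set.range cylClass := by
  obtain ⟨n, d, c, hU, -, -, hf⟩ := p.isV
  refine ⟨Finset.univ.sup fun i => (d i).length, fun s hs => ?_⟩
  obtain ⟨x, hx⟩ := cyl_nonempty (p.word ++ s)
  obtain ⟨i, hxi⟩ := Set.mem_iUnion.1 (hU ▸ cyl_append_subset _ _ hx)
  have hlen : (d i).length ≤ (p.word ++ s).length := by
    have := Finset.le_sup (f := fun i => (d i).length) (Finset.mem_univ i)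
    simp only [List.length_append]
    omega
  obtain ⟨t, ht⟩ := prefix_of_mem_cyl_of_length_le hxi hx hlen
  have hft : Set.EqOn p.f (sigmaMap (p.word ++ s) (c i ++ t)) (cyl (p.word ++ s)) :=
    ht ▸ eqOn_sigmaMap_append (hf i) t
  exact ⟨c i ++ t, (VPair.toBV_eq_cylClass (p := p.restrict s) hft).symm⟩

lemma exists_expandV_subset_range_cylClass (b : BV) :
    ∃ k, ↑(expandV b k) ⊆ Set.range cylClass := by
  obtain ⟨p, rfl⟩ : ∃ p : VPair, p.toBV = b := Quot.exists_rep b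
  obtain ⟨k, hk⟩ := p.exists_toBV_restrict_mem_range_cylClass
  refine ⟨k, fun e he => ?_⟩
  obtain ⟨s, hs, rfl⟩ := mem_expandV_toBV.1 he
  exact hk s hs

lemma exists_precV_image_cylClass {v : Finset BV} (hv : VIsVertex v) :
    ∃ C : Finset (List Bool), precV v (C.image cylClass) := by
  choose k hk using exists_expandV_subset_range_cylClass
  obtain ⟨C, -, hC⟩ := (Finset.subset_set_image_iff (s := Set.univ)
    (t := v.biUnion fun b => expandV b (k b))).1 (by
      rw [Set.image_univ, Finset.coe_biUnion]
      exact Set.iUnion₂_subset fun b _ => hk b)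
  exact ⟨C, hC ▸ precV_biUnion hv fun b _ => precV_expandV b (k b)⟩

lemma mem_expandV_cylClass_sub_length_iff {c : List Bool} {N : ℕ} (hc : c.length ≤ N)
    {e : BV} : e ∈ expandV (cylClass c) (N - c.length) ↔
      e ∈ expandV (cylClass []) N ∧ suppV e ⊆ cyl c := by
  simp only [mem_expandV_cylClass, List.nil_append]
  constructor
  · rintro ⟨s, hs, rfl⟩
    refine ⟨⟨c ++ s, by simp [hs, hc], rfl⟩, ?_⟩
    rw [suppV_cylClass]
    exact cyl_append_subset c s
  · rintro ⟨⟨u, hu, rfl⟩, hsub⟩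
    rw [suppV_cylClass] at hsub
    obtain ⟨x, hx⟩ := cyl_nonempty u
    obtain ⟨s, rfl⟩ := prefix_of_mem_cyl_of_length_le (hsub hx) hx (hu ▸ hc)
    exact ⟨s, by simp at hu; omega, rfl⟩

lemma precV_expandV_cylClass_nil {v : Finset BV} (hv : VIsVertex v) (hfull : vsuppV v = Set.univ)
    {C : Finset (List Bool)} (hvC : precV v (C.image cylClass)) {N : ℕ}
    (hN : ∀ c ∈ C, c.length ≤ N) : precV v (expandV (cylClass []) N) := by
  classical
  let w : BV → Finset BV := fun b => (expandV (cylClass []) N).filter fun e => suppV e ⊆ suppV b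
  have hw : ∀ c ∈ C, w (cylClass c) = expandV (cylClass c) (N - c.length) := fun c hc => by
    ext e
    rw [Finset.mem_filter, suppV_cylClass, mem_expandV_cylClass_sub_length_iff (hN c hc)]
  have hcover : (C.image cylClass).biUnion w = expandV (cylClass []) N := by
    refine Finset.Subset.antisymm (Finset.biUnion_subset.2 fun b _ => Finset.filter_subset _ _)
      fun e he => ?_
    obtain ⟨u, hu, rfl⟩ := mem_expandV_cylClass.1 he
    obtain ⟨x, hx⟩ := cyl_nonempty u
    have hxv : x ∈ vsuppV (C.image cylClass) :=
      (hvC.vsuppV_eq.trans hfull).symm ▸ Set.mem_univ x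
    obtain ⟨b, hb, hxb⟩ := Set.mem_iUnion₂.1 hxv
    obtain ⟨c, hc, rfl⟩ := Finset.mem_image.1 hb
    rw [suppV_cylClass] at hxb
    refine Finset.mem_biUnion.2 ⟨cylClass c, hb, Finset.mem_filter.2 ⟨he, ?_⟩⟩
    rw [suppV_cylClass, suppV_cylClass]
    exact cyl_subset_of_prefix (prefix_of_mem_cyl_of_length_le hxb hx (hu ▸ hN c hc))
  refine hvC.trans (hcover ▸ precV_biUnion (hvC.vIsVertex hv) ?_)
  simp only [Finset.mem_image]
  rintro _ ⟨c, hc, rfl⟩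
  exact hw c hc ▸ precV_expandV _ _

/-- Directedness for Thompson's group `V`: the full-support vertices of
`𝓑_V` form a directed set with respect to `⪯`. -/
theorem BV_directed (v₁ v₂ : Finset BV)
    (h₁ : VIsVertex v₁) (h₁full : vsuppV v₁ = Set.univ)
    (h₂ : VIsVertex v₂) (h₂full : vsuppV v₂ = Set.univ) :
    ∃ v'' : Finset BV, VIsVertex v'' ∧ vsuppV v'' = Set.univ ∧
      precV v₁ v'' ∧ precV v₂ v'' := by
  obtain ⟨C₁, hC₁⟩ := exists_precV_image_cylClass h₁
  obtain ⟨C₂, hC₂⟩ := exists_precV_image_cylClass h₂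
  let N := (C₁ ∪ C₂).sup List.length
  have hv₁ := precV_expandV_cylClass_nil h₁ h₁full hC₁ (N := N) fun c hc =>
    Finset.le_sup (Finset.mem_union_left C₂ hc)
  have hv₂ := precV_expandV_cylClass_nil h₂ h₂full hC₂ (N := N) fun c hc =>
    Finset.le_sup (Finset.mem_union_right C₁ hc)
  exact ⟨_, hv₁.vIsVertex h₁, hv₁.vsuppV_eq.trans h₁full, hv₁, hv₂⟩
end
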